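/- arXiv:1411.2515 — 4 statements merged into one kernel-verified Lean document; each statement's English description precedes it below -/
import Mathlib

section
/- Let A ∈ ℝ^{N×N} be the connectivity matrix with entries A_{ij} = Φ e^{−(i−j)ξ} for 1 ≤ j ≤ i, A_{iN} = e^{−iξ} for i < N, A_{ij} = 0 for i < j < N, and A_{NN} = Φ + e^{−Nξ}, where Φ = (1 − e^{−ξ}) a for some a ∈ ℝ and ξ > 0. If |a| < 1 then the maximum row sum matrix norm satisfies |||A|||_∞ < 1, and hence the spectral radius ρ(A) < 1. -/
open Real

/-- The connectivity matrix of the discretized time-delay reservoir (rows/columns indexed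
by `Fin N`, where index `i` stands for neuron `i+1`): for a non-last row `i`, the entries
are `Φ e^{−(i−j)ξ}` in columns `j ≤ i`, `e^{−iξ}` in the last column, and `0` elsewhere;
the last row has entries `Φ e^{−(N−j)ξ}` in columns `j < N` and `Φ + e^{−Nξ}` in the last
column, with `Φ = (1 − e^{−ξ}) a`. -/
noncomputable def reservoirConnectivity (N : ℕ) (ξ a : ℝ) : Matrix (Fin N) (Fin N) ℝ := fun i j =>
  let Φ : ℝ := (1 - Real.exp (-ξ)) * a
  if i.1 = N - 1 then
    if j.1 = N - 1 then Φ + Real.exp (-(N : ℝ) * ξ)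
    else Φ * Real.exp (-((N : ℝ) - ((j.1 : ℝ) + 1)) * ξ)
  else
    if j.1 ≤ i.1 then Φ * Real.exp (-((i.1 : ℝ) - (j.1 : ℝ)) * ξ)
    else if j.1 = N - 1 then Real.exp (-((i.1 : ℝ) + 1) * ξ)
    else 0

/-- If `|a| < 1` then the maximum row sum norm of the reservoir connectivity matrix is `< 1`,
and hence every (complex) eigenvalue has modulus `< 1`, i.e. the spectral radius is `< 1`. -/
theorem reservoirConnectivity_row_sums_lt_one (N : ℕ) (hN : 0 < N) (ξ a : ℝ)
    (hξ : 0 < ξ) (ha : |a| < 1) :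
    (∀ i : Fin N, ∑ j : Fin N, |reservoirConnectivity N ξ a i j| < 1) ∧
      ∀ μ ∈ spectrum ℂ ((reservoirConnectivity N ξ a).map (algebraMap ℝ ℂ)), ‖μ‖ < 1 := by
  set t := Real.exp (-ξ) with htdef
  have ht0 : 0 < t := Real.exp_pos _
  have ht1 : t < 1 := by rw [htdef, Real.exp_lt_one_iff]; linarith
  have ha0 : 0 ≤ |a| := abs_nonneg a
  have key : ∀ m : ℕ, Real.exp (-(m : ℝ) * ξ) = t ^ m := by
    intro m
    rw [show -(m : ℝ) * ξ = (m : ℕ) * (-ξ) by push_cast; ring, Real.exp_nat_mul]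
  have hgeom : ∀ m : ℕ, ∑ k ∈ Finset.range m, t ^ k = (1 - t ^ m) / (1 - t) := by
    intro m
    rw [geom_sum_eq (ne_of_lt ht1)]
    rw [div_eq_div_iff (by linarith) (by linarith)]
    ring
  have hΦabs : |(1 - t) * a| = (1 - t) * |a| := by
    rw [abs_mul, abs_of_pos (by linarith)]
  have hfinal : ∀ m : ℕ, |a| * (1 - t ^ (m + 1)) + t ^ (m + 1) < 1 := by
    intro m
    have h1 : t ^ (m + 1) < 1 := pow_lt_one₀ (le_of_lt ht0) ht1 (Nat.succ_ne_zero m)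
    nlinarith
  -- a "ℕ-indexed" description of the matrix entries
  have hA : ∀ i j : Fin N, reservoirConnectivity N ξ a i j =
      (fun (I J : ℕ) =>
        if I = N - 1 then
          if J = N - 1 then (1 - t) * a + t ^ N
          else (1 - t) * a * t ^ (N - 1 - J)
        else
          if J ≤ I then (1 - t) * a * t ^ (I - J)
          else if J = N - 1 then t ^ (I + 1)
          else 0) i.1 j.1 := by
    intro i j
    show (if i.1 = N - 1 then _ else _) = _
    by_cases h1 : i.1 = N - 1 <;> simp only [h1, if_pos, if_neg, if_true, if_false]
    · by_cases h2 : j.1 = N - 1 <;> simp only [h2, if_pos, if_neg, if_true, if_false]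
      · rw [key N]
      · have hj : j.1 + 1 ≤ N - 1 := by omega
        have : -((N : ℝ) - ((j.1 : ℝ) + 1)) * ξ = -((N - 1 - j.1 : ℕ) : ℝ) * ξ := by
          have h1N : 1 ≤ N := hN
          have : ((N - 1 - j.1 : ℕ) : ℝ) = (N : ℝ) - 1 - (j.1 : ℝ) := by
            have hj' : j.1 ≤ N - 1 := by omega
            push_cast [Nat.cast_sub hj', Nat.cast_sub h1N]
            ring
          rw [this]; ring
        rw [this, key]
    · by_cases h2 : j.1 ≤ i.1 <;> simp only [h2, if_pos, if_neg, if_true, if_false]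
      · have : -((i.1 : ℝ) - (j.1 : ℝ)) * ξ = -((i.1 - j.1 : ℕ) : ℝ) * ξ := by
          rw [Nat.cast_sub h2]
        rw [this, key]
      · by_cases h3 : j.1 = N - 1 <;> simp only [h3, if_pos, if_neg, if_true, if_false]
        have : -((i.1 : ℝ) + 1) * ξ = -((i.1 + 1 : ℕ) : ℝ) * ξ := by push_cast; ring
        rw [this, key]
  have hrow : ∀ i : Fin N, ∑ j : Fin N, |reservoirConnectivity N ξ a i j| < 1 := by
    intro i
    simp only [hA]
    rw [Fin.sum_univ_eq_sum_range (fun J => |(fun (I J : ℕ) =>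
        if I = N - 1 then
          if J = N - 1 then (1 - t) * a + t ^ N
          else (1 - t) * a * t ^ (N - 1 - J)
        else
          if J ≤ I then (1 - t) * a * t ^ (I - J)
          else if J = N - 1 then t ^ (I + 1)
          else 0) i.1 J|) N]
    by_cases h1 : i.1 = N - 1
    · -- last row
      obtain ⟨M, rfl⟩ : ∃ M, N = M + 1 := ⟨N - 1, (Nat.succ_pred_eq_of_pos hN).symm⟩
      simp only [h1, if_true, Nat.add_sub_cancel]
      rw [Finset.sum_range_succ]
      simp only [ite_true, if_true]
      have hterms : ∀ j ∈ Finset.range M,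
          |if j = M then (1 - t) * a + t ^ (M + 1) else (1 - t) * a * t ^ (M - j)|
            = (1 - t) * |a| * t ^ (M - j) := by
        intro j hj
        rw [Finset.mem_range] at hj
        rw [if_neg (Nat.ne_of_lt hj)]
        rw [abs_mul, hΦabs, abs_of_pos (pow_pos ht0 _)]
      rw [Finset.sum_congr rfl hterms]
      have hrefl : ∑ j ∈ Finset.range M, (1 - t) * |a| * t ^ (M - j)
          = ∑ k ∈ Finset.range M, (1 - t) * |a| * t ^ (k + 1) := by
        rw [← Finset.sum_range_reflect (fun k => (1 - t) * |a| * t ^ (k + 1)) M]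
        apply Finset.sum_congr rfl
        intro j hj
        rw [Finset.mem_range] at hj
        congr 2
        omega
      rw [hrefl]
      have hlast : |(1 - t) * a + t ^ (M + 1)| ≤ (1 - t) * |a| + t ^ (M + 1) := by
        calc |(1 - t) * a + t ^ (M + 1)| ≤ |(1 - t) * a| + |t ^ (M + 1)| := abs_add_le _ _
          _ = (1 - t) * |a| + t ^ (M + 1) := by
              rw [hΦabs, abs_of_pos (pow_pos ht0 _)]
      have hsum : ∑ k ∈ Finset.range M, (1 - t) * |a| * t ^ (k + 1) + ((1 - t) * |a| + t ^ (M + 1))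
          = (1 - t) * |a| * ((1 - t ^ (M + 1)) / (1 - t)) + t ^ (M + 1) := by
        rw [← hgeom (M + 1), Finset.sum_range_succ', mul_add, Finset.mul_sum, pow_zero, mul_one]
        ring
      have := hfinal M
      have hq : (1 - t) * |a| * ((1 - t ^ (M + 1)) / (1 - t)) = |a| * (1 - t ^ (M + 1)) := by
        field_simp [show (1:ℝ) - t ≠ 0 by linarith]
      calc ∑ k ∈ Finset.range M, (1 - t) * |a| * t ^ (k + 1) + |(1 - t) * a + t ^ (M + 1)|
          ≤ ∑ k ∈ Finset.range M, (1 - t) * |a| * t ^ (k + 1) + ((1 - t) * |a| + t ^ (M + 1)) := by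
            linarith
        _ = |a| * (1 - t ^ (M + 1)) + t ^ (M + 1) := by rw [hsum, hq]
        _ < 1 := hfinal M
    · -- non-last row
      simp only [h1, if_false]
      have hiN : i.1 + 1 ≤ N := i.2
      have hiN' : i.1 + 1 ≤ N - 1 := by omega
      rw [← Finset.sum_range_add_sum_Ico _ hiN]
      have hfirst : ∑ j ∈ Finset.range (i.1 + 1),
          |if j ≤ i.1 then (1 - t) * a * t ^ (i.1 - j) else if j = N - 1 then t ^ (i.1 + 1) else 0|
            = ∑ k ∈ Finset.range (i.1 + 1), (1 - t) * |a| * t ^ k := by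
        rw [← Finset.sum_range_reflect (fun k => (1 - t) * |a| * t ^ k) (i.1 + 1)]
        apply Finset.sum_congr rfl
        intro j hj
        rw [Finset.mem_range] at hj
        rw [if_pos (by omega : j ≤ i.1), abs_mul, hΦabs, abs_of_pos (pow_pos ht0 _)]
        congr 2 <;> omega
      have hsecond : ∑ j ∈ Finset.Ico (i.1 + 1) N,
          |if j ≤ i.1 then (1 - t) * a * t ^ (i.1 - j) else if j = N - 1 then t ^ (i.1 + 1) else 0|
            = t ^ (i.1 + 1) := by
        have : ∀ j ∈ Finset.Ico (i.1 + 1) N,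
            |if j ≤ i.1 then (1 - t) * a * t ^ (i.1 - j) else if j = N - 1 then t ^ (i.1 + 1) else 0|
              = if j = N - 1 then t ^ (i.1 + 1) else 0 := by
          intro j hj
          rw [Finset.mem_Ico] at hj
          rw [if_neg (by omega : ¬ j ≤ i.1)]
          by_cases h3 : j = N - 1
          · rw [if_pos h3, abs_of_pos (pow_pos ht0 _)]
          · rw [if_neg h3, abs_zero]
        rw [Finset.sum_congr rfl this, Finset.sum_ite_eq' (Finset.Ico (i.1 + 1) N) (N - 1)
          (fun _ => t ^ (i.1 + 1))]
        rw [if_pos (Finset.mem_Ico.mpr ⟨by omega, by omega⟩)]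
      rw [hfirst, hsecond, ← Finset.mul_sum, hgeom]
      have hq : (1 - t) * |a| * ((1 - t ^ (i.1 + 1)) / (1 - t)) = |a| * (1 - t ^ (i.1 + 1)) := by
        field_simp [show (1:ℝ) - t ≠ 0 by linarith]
      rw [hq]
      exact hfinal i.1
  refine ⟨hrow, ?_⟩
  intro μ hμ
  set B := (reservoirConnectivity N ξ a).map (algebraMap ℝ ℂ) with hB
  have heig : Module.End.HasEigenvalue (Matrix.toLin' B) μ := by
    rw [Module.End.hasEigenvalue_iff_mem_spectrum]
    rwa [show (Matrix.toLin' B) = Matrix.toLinAlgEquiv' B from rfl, AlgEquiv.spectrum_eq]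
  obtain ⟨k, hk⟩ := eigenvalue_mem_ball heig
  rw [Metric.mem_closedBall, dist_eq_norm] at hk
  have hnorm : ∀ j, ‖B k j‖ = |reservoirConnectivity N ξ a k j| := by
    intro j
    simp [hB, Matrix.map_apply, Complex.norm_real, Real.norm_eq_abs]
  have hsum : ∑ j ∈ Finset.univ.erase k, ‖B k j‖ + ‖B k k‖ = ∑ j : Fin N, ‖B k j‖ :=
    Finset.sum_erase_add _ _ (Finset.mem_univ k)
  have hlt : ∑ j : Fin N, ‖B k j‖ < 1 := by
    simp only [hnorm]
    exact hrow k
  calc ‖μ‖ = ‖(μ - B k k) + B k k‖ := by ring_nf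
    _ ≤ ‖μ - B k k‖ + ‖B k k‖ := norm_add_le _ _
    _ ≤ ∑ j ∈ Finset.univ.erase k, ‖B k j‖ + ‖B k k‖ := by linarith
    _ = ∑ j : Fin N, ‖B k j‖ := hsum
    _ < 1 := hlt
end

section
/- With A as above (the reservoir connectivity matrix with parameter a = ∂ₓf(x₀) and ξ > 0, N ≥ 2), |||A|||_∞ < 1 holds if and only if |a| < 1. -/
lemma reservoir_geom_bound (q a : ℝ) (hq0 : 0 < q) (hq1 : q < 1) (ha : |a| < 1)
    (m : ℕ) (hm : 1 ≤ m) :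
    (1 - q) * |a| * ∑ k ∈ Finset.range m, q ^ k + q ^ m < 1 := by
  have hgs := geom_sum_mul q m
  have hS : (1 - q) * ∑ k ∈ Finset.range m, q ^ k = 1 - q ^ m := by nlinarith [hgs]
  have hqm1 : q ^ m < 1 := pow_lt_one₀ hq0.le hq1 (by omega)
  have hqm0 : 0 < q ^ m := pow_pos hq0 m
  have ha0 : 0 ≤ |a| := abs_nonneg a
  nlinarith [mul_pos (sub_pos.2 ha) (sub_pos.2 hqm1),
    mul_assoc (1 - q) (|a|) (∑ k ∈ Finset.range m, q ^ k),
    mul_comm (|a|) ((1 - q) * ∑ k ∈ Finset.range m, q ^ k)]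

/-- For `N ≥ 2` and `ξ > 0`, the maximum row sum matrix norm of the reservoir connectivity
matrix satisfies `|||A|||_∞ < 1` if and only if `|a| < 1`. -/
theorem reservoirConnectivity_row_sum_lt_one_iff (N : ℕ) (hN : 2 ≤ N) (ξ a : ℝ)
    (hξ : 0 < ξ) :
    (∀ i : Fin N, ∑ j : Fin N, |reservoirConnectivity N ξ a i j| < 1) ↔ |a| < 1 := by
  set q := Real.exp (-ξ) with hq
  have hq0 : 0 < q := Real.exp_pos _
  have hq1 : q < 1 := by
    rw [hq]
    exact Real.exp_lt_one_iff.mpr (by linarith)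
  have habs : |(1 - q) * a| = (1 - q) * |a| := by
    rw [abs_mul, abs_of_nonneg (by linarith : (0:ℝ) ≤ 1 - q)]
  -- exp of natural multiples of ξ are powers of q
  have hexp : ∀ n : ℕ, Real.exp (-(n : ℝ) * ξ) = q ^ n := by
    intro n
    rw [hq, ← Real.exp_nat_mul]
    congr 1
    ring
  -- non-last row computation
  have row_ne : ∀ i : Fin N, i.1 < N - 1 →
      (∑ j : Fin N, |reservoirConnectivity N ξ a i j|) =
        (1 - q) * |a| * ∑ k ∈ Finset.range (i.1 + 1), q ^ k + q ^ (i.1 + 1) := by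
    intro i hi
    set g : ℕ → ℝ := fun j => if j ≤ i.1 then (1 - q) * |a| * q ^ (i.1 - j)
        else if j = N - 1 then q ^ (i.1 + 1) else 0 with hg
    have hstep : ∀ j : Fin N, |reservoirConnectivity N ξ a i j| = g j.1 := by
      intro j
      simp only [reservoirConnectivity, hg]
      rw [if_neg (by omega : ¬ i.1 = N - 1)]
      by_cases hji : j.1 ≤ i.1
      · rw [if_pos hji, if_pos hji]
        have he : Real.exp (-((i.1:ℝ) - (j.1:ℝ)) * ξ) = q ^ (i.1 - j.1) := by
          rw [← hexp (i.1 - j.1)]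
          congr 2
          have : ((i.1 - j.1 : ℕ) : ℝ) = (i.1:ℝ) - (j.1:ℝ) := by
            push_cast [Nat.cast_sub hji]; ring
          rw [this]
        rw [he, abs_mul, habs, abs_of_pos (pow_pos hq0 _)]
      · rw [if_neg hji, if_neg hji]
        by_cases hjN : j.1 = N - 1
        · rw [if_pos hjN, if_pos hjN]
          have he : Real.exp (-((i.1:ℝ) + 1) * ξ) = q ^ (i.1 + 1) := by
            rw [← hexp (i.1 + 1)]
            congr 2
            push_cast; ring
          rw [he, abs_of_pos (pow_pos hq0 _)]
        · rw [if_neg hjN, if_neg hjN, abs_zero]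
    calc (∑ j : Fin N, |reservoirConnectivity N ξ a i j|)
        = ∑ j : Fin N, g j.1 := Finset.sum_congr rfl (fun j _ => hstep j)
      _ = ∑ j ∈ Finset.range N, g j := Fin.sum_univ_eq_sum_range g N
      _ = ∑ j ∈ Finset.range (i.1 + 1), g j + ∑ j ∈ Finset.Ico (i.1 + 1) N, g j := by
          rw [Finset.sum_range_add_sum_Ico g (by omega : i.1 + 1 ≤ N)]
      _ = (1 - q) * |a| * ∑ k ∈ Finset.range (i.1 + 1), q ^ k + q ^ (i.1 + 1) := by
          congr 1
          · rw [Finset.mul_sum]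
            have h1 : ∀ j ∈ Finset.range (i.1 + 1), g j = (1 - q) * |a| * q ^ (i.1 - j) := by
              intro j hj
              rw [hg]
              simp only
              rw [if_pos (by simpa [Nat.lt_succ_iff] using Finset.mem_range.mp hj)]
            rw [Finset.sum_congr rfl h1]
            have h2 := Finset.sum_range_reflect (fun k => (1 - q) * |a| * q ^ k) (i.1 + 1)
            simp only [Nat.add_sub_cancel] at h2
            exact h2
          · rw [Finset.sum_eq_single_of_mem (N - 1)
              (Finset.mem_Ico.mpr ⟨by omega, by omega⟩)]
            · rw [hg]; simp only
              rw [if_neg (by omega)]; simp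
            · intro b hb hbne
              rw [hg]; simp only
              have hb' := Finset.mem_Ico.mp hb
              rw [if_neg (by omega), if_neg hbne]
  -- last row bound
  have row_last : ∀ i : Fin N, i.1 = N - 1 →
      (∑ j : Fin N, |reservoirConnectivity N ξ a i j|) ≤
        (1 - q) * |a| * ∑ k ∈ Finset.range N, q ^ k + q ^ N := by
    intro i hi
    set g : ℕ → ℝ := fun j =>
      (1 - q) * |a| * q ^ (N - 1 - j) + (if j = N - 1 then q ^ N else 0) with hg
    have hstep : ∀ j : Fin N, |reservoirConnectivity N ξ a i j| ≤ g j.1 := by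
      intro j
      simp only [reservoirConnectivity, hg]
      rw [if_pos hi]
      by_cases hjN : j.1 = N - 1
      · rw [if_pos hjN, if_pos hjN]
        have he : Real.exp (-(N : ℝ) * ξ) = q ^ N := hexp N
        rw [he, hjN, Nat.sub_self, pow_zero, mul_one]
        calc |(1 - q) * a + q ^ N| ≤ |(1 - q) * a| + |q ^ N| := abs_add_le _ _
          _ = (1 - q) * |a| + q ^ N := by
              rw [habs, abs_of_pos (pow_pos hq0 _)]
      · rw [if_neg hjN, if_neg hjN]
        have hjlt : j.1 < N - 1 := by omega
        have he : Real.exp (-((N : ℝ) - ((j.1:ℝ) + 1)) * ξ) = q ^ (N - 1 - j.1) := by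
          rw [← hexp (N - 1 - j.1)]
          congr 2
          have : ((N - 1 - j.1 : ℕ) : ℝ) = (N : ℝ) - ((j.1:ℝ) + 1) := by
            have h1 : (N - 1 - j.1 : ℕ) = N - (j.1 + 1) := by omega
            rw [h1, Nat.cast_sub (by omega)]
            push_cast; ring
          rw [this]
        rw [he, abs_mul, habs, abs_of_pos (pow_pos hq0 _)]
        simp
    calc (∑ j : Fin N, |reservoirConnectivity N ξ a i j|)
        ≤ ∑ j : Fin N, g j.1 := Finset.sum_le_sum (fun j _ => hstep j)
      _ = ∑ j ∈ Finset.range N, g j := Fin.sum_univ_eq_sum_range g N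
      _ = (1 - q) * |a| * ∑ k ∈ Finset.range N, q ^ k + q ^ N := by
          rw [hg]
          rw [Finset.sum_add_distrib]
          congr 1
          · rw [Finset.mul_sum]
            exact Finset.sum_range_reflect (fun k => (1 - q) * |a| * q ^ k) N
          · rw [Finset.sum_ite_eq' (Finset.range N) (N - 1) (fun _ => q ^ N)]
            rw [if_pos (Finset.mem_range.mpr (by omega))]
  constructor
  · intro h
    have h0 := h ⟨0, by omega⟩
    rw [row_ne ⟨0, by omega⟩ (by simp; omega)] at h0
    norm_num [Finset.sum_range_one] at h0
    have hlt : (1 - q) * |a| < (1 - q) * 1 := by linarith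
    exact lt_of_mul_lt_mul_left hlt (by linarith)
  · intro ha i
    by_cases hi : i.1 = N - 1
    · exact lt_of_le_of_lt (row_last i hi)
        (reservoir_geom_bound q a hq0 hq1 ha N (by omega))
    · rw [row_ne i (by omega)]
      exact reservoir_geom_bound q a hq0 hq1 ha (i.1 + 1) (by omega)
end

section
/- Let B = (1/Φ) A where A is the reservoir connectivity matrix and Φ ≠ 0. Every eigenvalue λ ≠ 1 of B with eigenvector having nonzero last component satisfies (λ − 1)^N / λ^{N−1} = e^{−Nξ}/Φ; equivalently, λ is a root of λ^N − (e^{−Nξ}/Φ + N) λ^{N−1} + Σ_{j=0}^{N−2} C(N,j) (−1)^{N−j} λ^j = 0. -/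
/-!
Row `i + 1` of the connectivity matrix is `e^{-ξ}` times row `i` plus `Φ` on the diagonal, and
row `0` is `Φ e₀ + e^{-ξ} e_{N-1}`. For an eigenvector `v` of `A / Φ` with eigenvalue `λ` this gives
`(λ - 1) vᵢ₊₁ = e^{-ξ} λ vᵢ` and `Φ (λ - 1) v₀ = e^{-ξ} v_{N-1}`; chaining these from `v₀` to
`v_{N-1}` and cancelling `v_{N-1} ≠ 0` yields `Φ (λ - 1)^N = e^{-Nξ} λ^{N-1}`, and the polynomial
form is the binomial expansion of `(λ - 1)^N`.
-/

lemma Real.exp_neg_natCast_mul (k : ℕ) (ξ : ℝ) : exp (-(k : ℝ) * ξ) = exp (-ξ) ^ k := by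
  rw [← exp_nat_mul]; ring_nf

open Real in
lemma reservoirConnectivity_apply (N : ℕ) (ξ a : ℝ) (i j : Fin N) :
    reservoirConnectivity N ξ a i j =
      (1 - exp (-ξ)) * a * (if j ≤ i then exp (-ξ) ^ (i - j : ℕ) else 0) +
        if (j : ℕ) = N - 1 then exp (-ξ) ^ ((i : ℕ) + 1) else 0 := by
  have hi := i.2
  have hj := j.2
  simp only [reservoirConnectivity, Fin.le_def]
  split_ifs <;> try omega
  all_goals simp only [← Real.exp_neg_natCast_mul, mul_zero, add_zero, zero_add]
  · rw [show (i : ℕ) - j = 0 by omega, show (i : ℕ) + 1 = N by omega]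
    simp
  · have hN : (N : ℝ) = (i : ℕ) + 1 := by exact_mod_cast (by omega : N = (i : ℕ) + 1)
    rw [Nat.cast_sub (by omega), hN]
    ring_nf
  · rw [Nat.cast_sub (by omega)]
  · push_cast; ring_nf

open Real in
lemma reservoirConnectivity_zero (n : ℕ) (ξ a : ℝ) :
    reservoirConnectivity (n + 1) ξ a 0 =
      ((1 - exp (-ξ)) * a) • Pi.single 0 1 + exp (-ξ) • Pi.single (Fin.last n) 1 := by
  funext j
  simp only [reservoirConnectivity_apply, Fin.le_zero_iff, Pi.add_apply, Pi.smul_apply,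
    Pi.single_apply, smul_eq_mul, Fin.ext_iff, Fin.val_last, Fin.val_zero]
  split_ifs <;> simp_all

open Real in
lemma reservoirConnectivity_succ (n : ℕ) (ξ a : ℝ) (i : Fin n) :
    reservoirConnectivity (n + 1) ξ a i.succ =
      exp (-ξ) • reservoirConnectivity (n + 1) ξ a i.castSucc +
        ((1 - exp (-ξ)) * a) • Pi.single i.succ 1 := by
  funext j
  simp only [reservoirConnectivity_apply, Pi.add_apply, Pi.smul_apply,
    Pi.single_apply, smul_eq_mul, Fin.le_def, Fin.ext_iff, Fin.val_succ, Fin.val_castSucc]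
  split_ifs <;> try omega
  · rw [show (i : ℕ) + 1 - j = 0 by omega]; ring
  · rw [show (i : ℕ) + 1 - j = (i - j) + 1 by omega]; ring
  · rw [show (i : ℕ) + 1 - j = 0 by omega]; ring
  · ring
  · ring

lemma reservoirConnectivity_map_zero {S : Type*} [Semiring S] (f : ℝ →+* S) (n : ℕ) (ξ a : ℝ) :
    (reservoirConnectivity (n + 1) ξ a).map f 0 =
      f ((1 - Real.exp (-ξ)) * a) • Pi.single 0 1 +
        f (Real.exp (-ξ)) • Pi.single (Fin.last n) 1 := by
  ext j
  simp only [Matrix.map_apply, reservoirConnectivity_zero, Pi.add_apply, Pi.smul_apply,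
    smul_eq_mul, map_add, map_mul, Pi.single_apply, apply_ite f, map_one, map_zero]

lemma reservoirConnectivity_map_succ {S : Type*} [Semiring S] (f : ℝ →+* S) (n : ℕ) (ξ a : ℝ)
    (i : Fin n) :
    (reservoirConnectivity (n + 1) ξ a).map f i.succ =
      f (Real.exp (-ξ)) • (reservoirConnectivity (n + 1) ξ a).map f i.castSucc +
        f ((1 - Real.exp (-ξ)) * a) • Pi.single i.succ 1 := by
  ext j
  simp only [Matrix.map_apply, reservoirConnectivity_succ, Pi.add_apply, Pi.smul_apply,
    smul_eq_mul, map_add, map_mul, Pi.single_apply, apply_ite f, map_one, map_zero]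

lemma Fin.pow_val_mul_eq_pow_val_mul_zero {M : Type*} [CommMonoid M] {n : ℕ} {b c : M}
    {u : Fin (n + 1) → M} (h : ∀ i : Fin n, b * u i.succ = c * u i.castSucc) (i : Fin (n + 1)) :
    b ^ (i : ℕ) * u i = c ^ (i : ℕ) * u 0 := by
  induction i using Fin.induction with
  | zero => simp
  | succ i ih =>
    rw [Fin.val_castSucc] at ih
    calc b ^ ((i : ℕ) + 1) * u i.succ = b ^ (i : ℕ) * (b * u i.succ) := by
          rw [pow_succ, mul_assoc]
      _ = c * (b ^ (i : ℕ) * u i.castSucc) := by rw [h, mul_left_comm]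
      _ = c ^ ((i : ℕ) + 1) * u 0 := by rw [ih, ← mul_assoc, pow_succ']

open Matrix in
theorem mul_sub_one_pow_eq_of_mulVec_eq_smul {K : Type*} [CommRing K] [IsDomain K] {n : ℕ}
    {M : Matrix (Fin (n + 1)) (Fin (n + 1)) K} {Φ r μ : K} {v : Fin (n + 1) → K}
    (hM0 : M 0 = Φ • Pi.single 0 1 + r • Pi.single (Fin.last n) 1)
    (hMsucc : ∀ i : Fin n, M i.succ = r • M i.castSucc + Φ • Pi.single i.succ 1)
    (hΦ : Φ ≠ 0) (hv : v (Fin.last n) ≠ 0) (heig : M *ᵥ v = Φ • μ • v) :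
    Φ * (μ - 1) ^ (n + 1) = r ^ (n + 1) * μ ^ n := by
  have hrow (k : Fin (n + 1)) : M k ⬝ᵥ v = Φ * μ * v k := by
    rw [mul_assoc]
    exact congrFun heig k
  have h0 : Φ * (μ - 1) * v 0 = r * v (Fin.last n) := by
    have h := hrow 0
    rw [hM0, add_dotProduct, smul_dotProduct, smul_dotProduct, single_one_dotProduct,
      single_one_dotProduct, smul_eq_mul, smul_eq_mul] at h
    linear_combination -h
  have hsucc (i : Fin n) : (μ - 1) * v i.succ = r * μ * v i.castSucc := by
    have h := hrow i.succ
    rw [hMsucc, add_dotProduct, smul_dotProduct, smul_dotProduct, single_one_dotProduct,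
      hrow, smul_eq_mul, smul_eq_mul] at h
    exact mul_left_cancel₀ hΦ (by linear_combination -h)
  have hlast := Fin.pow_val_mul_eq_pow_val_mul_zero hsucc (Fin.last n)
  rw [Fin.val_last] at hlast
  refine mul_right_cancel₀ hv ?_
  linear_combination (Φ * (μ - 1)) * hlast + (r * μ) ^ n * h0

theorem sub_one_pow_succ {R : Type*} [CommRing R] (x : R) (n : ℕ) :
    (x - 1) ^ (n + 1) = x ^ (n + 1) - ((n + 1 : ℕ) : R) * x ^ n +
      ∑ j ∈ Finset.range n, ((n + 1).choose j : R) * (-1) ^ (n + 1 - j) * x ^ j := by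
  rw [sub_eq_add_neg, add_pow, Finset.sum_range_succ, Finset.sum_range_succ, Nat.choose_self,
    Nat.sub_self, Nat.add_sub_cancel_left, Nat.choose_succ_self_right]
  have hterm (j : ℕ) : x ^ j * (-1) ^ (n + 1 - j) * ((n + 1).choose j : R) =
      ((n + 1).choose j : R) * (-1) ^ (n + 1 - j) * x ^ j := by ring
  simp only [hterm]
  push_cast
  ring

theorem pow_ne_zero_of_mul_sub_one_pow_succ_eq {R : Type*} [CommRing R] [IsDomain R]
    {Φ q μ : R} {n : ℕ} (hΦ : Φ ≠ 0) (h : Φ * (μ - 1) ^ (n + 1) = q * μ ^ n) : μ ^ n ≠ 0 := by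
  intro hμ
  rw [hμ, mul_zero, mul_eq_zero, pow_eq_zero_iff n.succ_ne_zero, sub_eq_zero] at h
  rcases h with hΦ' | rfl
  · exact hΦ hΦ'
  · simp at hμ

/-- Let `B = (1/Φ) A` where `A` is the reservoir connectivity matrix and `Φ ≠ 0`. Every
eigenvalue `λ ≠ 1` of `B` whose eigenvector has nonzero last component satisfies
`(λ − 1)^N / λ^{N−1} = e^{−Nξ}/Φ`, i.e. it is a root of
`λ^N − (e^{−Nξ}/Φ + N) λ^{N−1} + Σ_{j=0}^{N−2} C(N,j) (−1)^{N−j} λ^j = 0`. -/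
theorem reservoirConnectivity_eigenvalue_equation (N : ℕ) (hN : 0 < N) (ξ a : ℝ)
    (Φ : ℝ) (hΦdef : Φ = (1 - Real.exp (-ξ)) * a) (hΦ : Φ ≠ 0)
    (lam : ℂ) (v : Fin N → ℂ) (hvN : v ⟨N - 1, by omega⟩ ≠ 0)
    (heig : Matrix.mulVec
        ((1 / (Φ : ℂ)) • (reservoirConnectivity N ξ a).map (algebraMap ℝ ℂ)) v = lam • v) :
    (lam - 1) ^ N / lam ^ (N - 1) = ((Real.exp (-(N : ℝ) * ξ) / Φ : ℝ) : ℂ) ∧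
      lam ^ N - (((Real.exp (-(N : ℝ) * ξ) / Φ : ℝ) : ℂ) + (N : ℂ)) * lam ^ (N - 1) +
          ∑ j ∈ Finset.range (N - 1),
            (N.choose j : ℂ) * (-1 : ℂ) ^ (N - j) * lam ^ j = 0 := by
  obtain ⟨n, rfl⟩ : ∃ n, N = n + 1 := ⟨N - 1, by omega⟩
  have hΦc : (Φ : ℂ) ≠ 0 := Complex.ofReal_ne_zero.mpr hΦ
  rw [Matrix.smul_mulVec, one_div, inv_smul_eq_iff₀ hΦc] at heig
  have hchar : (Φ : ℂ) * (lam - 1) ^ (n + 1) = (Real.exp (-ξ) : ℂ) ^ (n + 1) * lam ^ n := by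
    subst hΦdef
    exact mul_sub_one_pow_eq_of_mulVec_eq_smul (reservoirConnectivity_map_zero _ n ξ a)
      (reservoirConnectivity_map_succ _ n ξ a) hΦc hvN heig
  have hlam := pow_ne_zero_of_mul_sub_one_pow_succ_eq hΦc hchar
  have hratio :
      ((Real.exp (-((n + 1 : ℕ) : ℝ) * ξ) / Φ : ℝ) : ℂ) = (lam - 1) ^ (n + 1) / lam ^ n := by
    rw [Real.exp_neg_natCast_mul, Complex.ofReal_div, Complex.ofReal_pow, div_eq_div_iff hΦc hlam]
    linear_combination -hchar
  rw [Nat.add_sub_cancel, hratio]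
  refine ⟨rfl, ?_⟩
  linear_combination -div_mul_cancel₀ ((lam - 1) ^ (n + 1)) hlam - sub_one_pow_succ lam n
end

section
/- Let Γ₀ be symmetric positive semidefinite, λ ≥ 0, and v ∈ ℝ^N. Then 0 ≤ vᵀ(Γ₀+λI)^{−1}(Γ₀+2λI)(Γ₀+λI)^{−1} v ≤ Var(y) whenever v = Cov(y, x) for a square-integrable random variable y and random vector x with covariance Γ₀. Consequently the memory capacity C_H = vᵀ(Γ₀+λI)^{−1}(Γ₀+2λI)(Γ₀+λI)^{−1} v / Var(y) satisfies 0 ≤ C_H ≤ 1. -/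
open Matrix MeasureTheory ProbabilityTheory

/-!
The ridge readout `w = (Γ₀ + λI)⁻¹ v` satisfies `v = (Γ₀ + λI) w`, which turns the quadratic form
into `wᵀ(Γ₀ + 2λI)w ≥ 0` and also into `2 wᵀv - wᵀΓ₀w`. The latter equals
`Var(y) - Var(wᵀx - y)` for every `w`, hence is at most `Var(y)`. When `Γ₀ + λI` is singular
(only possible for `λ = 0`) its `⁻¹` is `0` by convention, and the quadratic form vanishes.
-/

section Covariance

variable {Ω ι : Type*} [MeasurableSpace Ω] {μ : Measure Ω} [Fintype ι]
  {y : Ω → ℝ} {x : ι → Ω → ℝ}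

lemma variance_sum_smul_sub [IsFiniteMeasure μ] (hy : MemLp y 2 μ)
    (hx : ∀ i, MemLp (x i) 2 μ) (w : ι → ℝ) :
    Var[∑ i, w i • x i - y; μ] =
      w ⬝ᵥ (Matrix.of fun i j ↦ cov[x i, x j; μ]) *ᵥ w
        - 2 * (w ⬝ᵥ fun i ↦ cov[y, x i; μ]) + Var[y; μ] := by
  have hwx : ∀ i, MemLp (w i • x i) 2 μ := fun i ↦ (hx i).const_smul (w i)
  rw [variance_sub (memLp_finsetSum' _ fun i _ ↦ hwx i) hy, variance_sum hwx,
    covariance_sum_left hwx hy]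
  simp only [covariance_smul_left, covariance_smul_right, covariance_comm y, dotProduct,
    mulVec, of_apply, Finset.mul_sum]
  congr 2
  refine Finset.sum_congr rfl fun i _ ↦ Finset.sum_congr rfl fun j _ ↦ ?_
  ring

end Covariance

section Ridge

variable {n : Type*} [Fintype n] [DecidableEq n]

noncomputable def ridgeExplainedVariance (Γ : Matrix n n ℝ) (l : ℝ) (v : n → ℝ) : ℝ :=
  v ⬝ᵥ ((Γ + l • 1)⁻¹ * (Γ + (2 * l) • 1) * (Γ + l • 1)⁻¹) *ᵥ v

variable {Γ : Matrix n n ℝ} {l : ℝ}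

lemma ridgeExplainedVariance_of_not_isUnit (hA : ¬IsUnit (Γ + l • 1).det) (v : n → ℝ) :
    ridgeExplainedVariance Γ l v = 0 := by
  simp [ridgeExplainedVariance, nonsing_inv_apply_not_isUnit _ hA]

lemma ridgeExplainedVariance_eq_dotProduct_mulVec (hΓ : Γ.IsHermitian) (v : n → ℝ) :
    ridgeExplainedVariance Γ l v =
      (Γ + l • 1)⁻¹ *ᵥ v ⬝ᵥ (Γ + (2 * l) • 1) *ᵥ (Γ + l • 1)⁻¹ *ᵥ v := by
  have hA : (Γ + l • 1)ᵀ = Γ + l • 1 := by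
    rw [transpose_add, (isHermitian_iff_isSymm.mp hΓ).eq, transpose_smul, transpose_one]
  rw [ridgeExplainedVariance, ← mulVec_mulVec, ← mulVec_mulVec, dotProduct_mulVec,
    ← mulVec_transpose, transpose_nonsing_inv, hA]

lemma ridgeExplainedVariance_eq_two_mul_sub (hΓ : Γ.IsHermitian) (hA : IsUnit (Γ + l • 1).det)
    (v : n → ℝ) :
    ridgeExplainedVariance Γ l v =
      2 * ((Γ + l • 1)⁻¹ *ᵥ v ⬝ᵥ v) - (Γ + l • 1)⁻¹ *ᵥ v ⬝ᵥ Γ *ᵥ (Γ + l • 1)⁻¹ *ᵥ v := by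
  have hv : v = (Γ + l • 1) *ᵥ ((Γ + l • 1)⁻¹ *ᵥ v) := by
    rw [mulVec_mulVec, mul_nonsing_inv _ hA, one_mulVec]
  rw [ridgeExplainedVariance_eq_dotProduct_mulVec hΓ]
  generalize (Γ + l • 1)⁻¹ *ᵥ v = w at hv ⊢
  subst hv
  simp only [add_mulVec, smul_mulVec, one_mulVec, dotProduct_add, dotProduct_smul, smul_eq_mul]
  ring

lemma ridgeExplainedVariance_nonneg (hΓ : Γ.PosSemidef) (hl : 0 ≤ l) (v : n → ℝ) :
    0 ≤ ridgeExplainedVariance Γ l v := by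
  rw [ridgeExplainedVariance_eq_dotProduct_mulVec hΓ.isHermitian]
  simpa using (hΓ.add (PosSemidef.one.smul (by positivity : 0 ≤ 2 * l))).dotProduct_mulVec_nonneg
    ((Γ + l • 1)⁻¹ *ᵥ v)

lemma ridgeExplainedVariance_le (hΓ : Γ.IsHermitian) {v : n → ℝ} {c : ℝ} (hc : 0 ≤ c)
    (h : ∀ w, 2 * (w ⬝ᵥ v) - w ⬝ᵥ Γ *ᵥ w ≤ c) :
    ridgeExplainedVariance Γ l v ≤ c := by
  by_cases hA : IsUnit (Γ + l • 1).det
  · exact ridgeExplainedVariance_eq_two_mul_sub hΓ hA v ▸ h _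
  · exact ridgeExplainedVariance_of_not_isUnit hA v ▸ hc

end Ridge

/-- Boundedness of the memory capacity: if `Γ₀` is the (positive semidefinite) covariance
matrix of a square-integrable random vector `x`, `v = Cov(y, x)` for a square-integrable
random variable `y`, and `λ ≥ 0`, then the quadratic form
`vᵀ(Γ₀+λI)⁻¹(Γ₀+2λI)(Γ₀+λI)⁻¹ v` lies in `[0, Var(y)]`, and consequently the memory
capacity `C_H = vᵀ(Γ₀+λI)⁻¹(Γ₀+2λI)(Γ₀+λI)⁻¹ v / Var(y)` satisfies `0 ≤ C_H ≤ 1`. -/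
theorem memory_capacity_bounds {Ω : Type*} [MeasureSpace Ω]
    [IsProbabilityMeasure (ℙ : Measure Ω)] (N : ℕ)
    (y : Ω → ℝ) (x : Fin N → Ω → ℝ)
    (hy : MemLp y 2 ℙ) (hx : ∀ i, MemLp (x i) 2 ℙ)
    (Γ₀ : Matrix (Fin N) (Fin N) ℝ) (hΓpsd : Γ₀.PosSemidef)
    (hΓ : ∀ i j, Γ₀ i j =
      ∫ ω, (x i ω - ∫ ω', x i ω' ∂ℙ) * (x j ω - ∫ ω', x j ω' ∂ℙ) ∂ℙ)
    (v : Fin N → ℝ)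
    (hv : ∀ i, v i = ∫ ω, (y ω - ∫ ω', y ω' ∂ℙ) * (x i ω - ∫ ω', x i ω' ∂ℙ) ∂ℙ)
    (l : ℝ) (hl : 0 ≤ l) :
    (0 ≤ v ⬝ᵥ ((Γ₀ + l • (1 : Matrix (Fin N) (Fin N) ℝ))⁻¹ *
          (Γ₀ + (2 * l) • (1 : Matrix (Fin N) (Fin N) ℝ)) *
          (Γ₀ + l • (1 : Matrix (Fin N) (Fin N) ℝ))⁻¹).mulVec v ∧
      v ⬝ᵥ ((Γ₀ + l • (1 : Matrix (Fin N) (Fin N) ℝ))⁻¹ *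
          (Γ₀ + (2 * l) • (1 : Matrix (Fin N) (Fin N) ℝ)) *
          (Γ₀ + l • (1 : Matrix (Fin N) (Fin N) ℝ))⁻¹).mulVec v ≤ variance y ℙ) ∧
      (0 ≤ (v ⬝ᵥ ((Γ₀ + l • (1 : Matrix (Fin N) (Fin N) ℝ))⁻¹ *
            (Γ₀ + (2 * l) • (1 : Matrix (Fin N) (Fin N) ℝ)) *
            (Γ₀ + l • (1 : Matrix (Fin N) (Fin N) ℝ))⁻¹).mulVec v) / variance y ℙ ∧
        (v ⬝ᵥ ((Γ₀ + l • (1 : Matrix (Fin N) (Fin N) ℝ))⁻¹ *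
            (Γ₀ + (2 * l) • (1 : Matrix (Fin N) (Fin N) ℝ)) *
            (Γ₀ + l • (1 : Matrix (Fin N) (Fin N) ℝ))⁻¹).mulVec v) / variance y ℙ ≤ 1) := by
  obtain rfl : Γ₀ = Matrix.of fun i j ↦ cov[x i, x j; ℙ] := Matrix.ext hΓ
  obtain rfl : v = fun i ↦ cov[y, x i; ℙ] := funext hv
  have hvar := variance_nonneg y ℙ
  have h0 := ridgeExplainedVariance_nonneg hΓpsd hl (fun i ↦ cov[y, x i; ℙ])
  have h1 : ridgeExplainedVariance _ l _ ≤ Var[y; ℙ] :=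
    ridgeExplainedVariance_le hΓpsd.isHermitian hvar fun w ↦ by
      linarith [variance_sum_smul_sub hy hx w, variance_nonneg (∑ i, w i • x i - y) ℙ]
  exact ⟨⟨h0, h1⟩, div_nonneg h0 hvar, div_le_one_of_le₀ h1 hvar⟩
end
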